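/- arXiv:2501.05338 — 3 statements merged into one kernel-verified Lean document; each statement's English description precedes it below -/
import Mathlib

section
/- Suppose the threshold shifts are a common constant: Δ_{γ,j} = Δ_γ for all j = 1,…,J−1. If there exist categories j < k with F_X(j) < F_Y(j) and F_Y(k) < F_X(k), then for every τ_1 ∈ (F_X(j), F_Y(j)] and every τ_2 ∈ (F_Y(k), F_X(k)], Q_X*(τ_2) − Q_X*(τ_1) < Q_Y*(τ_2) − Q_Y*(τ_1). If instead F_Y(j) < F_X(j) and F_X(k) < F_Y(k), then for every τ_1 ∈ (F_Y(j), F_X(j)] and every τ_2 ∈ (F_X(k), F_Y(k)], Q_Y*(τ_2) − Q_Y*(τ_1) < Q_X*(τ_2) − Q_X*(τ_1). -/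
open MeasureTheory Set

/-- CDF of a Borel (probability) measure on ℝ: `F(x) = μ((-∞, x])`. -/
noncomputable def cdfOf (μ : MeasureTheory.Measure ℝ) (x : ℝ) : ℝ := (μ (Set.Iic x)).toReal

/-- Quantile function with values in the extended reals:
`Q(τ) = inf {x ∈ ℝ : F(x) ≥ τ}`, with the convention `inf ∅ = +∞`
(the infimum is taken in `EReal`, so an empty set gives `⊤`). -/
noncomputable def quantileE (μ : MeasureTheory.Measure ℝ) (τ : ℝ) : EReal :=
  sInf {y : EReal | ∃ x : ℝ, y = (x : EReal) ∧ τ ≤ cdfOf μ x}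

section Aux

variable (μ : MeasureTheory.Measure ℝ) [IsProbabilityMeasure μ]

lemma cdfOf_eq_cdf (x : ℝ) : cdfOf μ x = ProbabilityTheory.cdf μ x :=
  (ProbabilityTheory.cdf_eq_real μ x).symm

lemma cdfOf_mono : Monotone (cdfOf μ) := by
  intro a b hab
  rw [cdfOf_eq_cdf, cdfOf_eq_cdf]
  exact (ProbabilityTheory.cdf μ).mono hab

lemma quantileE_le {τ x : ℝ} (h : τ ≤ cdfOf μ x) : quantileE μ τ ≤ (x : EReal) :=
  sInf_le ⟨x, rfl, h⟩

lemma lt_quantileE {τ x : ℝ} (h : cdfOf μ x < τ) : (x : EReal) < quantileE μ τ := by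
  by_contra hle
  push_neg at hle
  -- right-continuity of the cdf at x
  have hrc := (ProbabilityTheory.cdf μ).right_continuous x
  rw [Metric.continuousWithinAt_iff] at hrc
  obtain ⟨δ, hδ, hsmall⟩ := hrc (τ - cdfOf μ x) (by linarith)
  -- find an element of the set below x + δ/2
  have hlt : quantileE μ τ < ((x + δ/2 : ℝ) : EReal) := by
    refine lt_of_le_of_lt hle ?_
    exact_mod_cast (by linarith : x < x + δ/2)
  obtain ⟨y, ⟨z, rfl, hz⟩, hyx⟩ := sInf_lt_iff.mp hlt
  have hzx : z < x + δ/2 := by exact_mod_cast hyx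
  have h1 : τ ≤ cdfOf μ (x + δ/2) := hz.trans (cdfOf_mono μ hzx.le)
  have h2 := hsmall (show x + δ/2 ∈ Ici x by simp [mem_Ici]; linarith)
    (show dist (x + δ/2) x < δ by rw [Real.dist_eq, abs_of_nonneg (by linarith)]; linarith)
  rw [Real.dist_eq, ← cdfOf_eq_cdf, ← cdfOf_eq_cdf, abs_lt] at h2
  linarith

lemma quantileE_ne_bot {τ : ℝ} (hτ : 0 < τ) : quantileE μ τ ≠ ⊥ := by
  have htb := ProbabilityTheory.tendsto_cdf_atBot μ
  obtain ⟨x₀, hx₀⟩ := (htb.eventually (eventually_lt_nhds hτ)).exists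
  rw [← cdfOf_eq_cdf] at hx₀
  exact fun hbot => absurd (lt_quantileE μ hx₀) (by simp [hbot])

/-- There is a real number equal to the quantile, when it is pinched. -/
lemma quantileE_exists_real {τ x : ℝ} (hτ : 0 < τ) (h : τ ≤ cdfOf μ x) :
    ∃ q : ℝ, quantileE μ τ = (q : EReal) := by
  have h1 := quantileE_le μ h
  have h2 := quantileE_ne_bot μ hτ
  lift quantileE μ τ to ℝ using ⟨(h1.trans_lt (EReal.coe_lt_top x)).ne, h2⟩ with q
  exact ⟨q, rfl⟩

lemma cdfOf_nonneg (x : ℝ) : 0 ≤ cdfOf μ x := ENNReal.toReal_nonneg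

end Aux

/-- Key lemma: crossing of cdfs at two pairs of points with equal gaps implies
strict ordering of interquantile ranges. -/
lemma key (μX μY : MeasureTheory.Measure ℝ)
    [IsProbabilityMeasure μX] [IsProbabilityMeasure μY]
    (a b c d : ℝ) (hab : a < b) (hgap : c - a = d - b)
    (τ₁ τ₂ : ℝ) (h1 : cdfOf μX a < τ₁) (h2 : τ₁ ≤ cdfOf μY c)
    (h3 : cdfOf μY d < τ₂) (h4 : τ₂ ≤ cdfOf μX b) :
    quantileE μX τ₂ - quantileE μX τ₁ < quantileE μY τ₂ - quantileE μY τ₁ := by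
  have hτ₁ : 0 < τ₁ := (cdfOf_nonneg μX a).trans_lt h1
  have hcd : c < d := by linarith
  have hτ₁₂ : τ₁ < τ₂ := lt_of_le_of_lt (h2.trans (cdfOf_mono μY hcd.le)) h3
  -- X quantiles
  obtain ⟨qx1, hqx1⟩ := quantileE_exists_real μX hτ₁ (hτ₁₂.le.trans h4)
  obtain ⟨qx2, hqx2⟩ := quantileE_exists_real μX (hτ₁.trans hτ₁₂) h4
  have hax1 : a < qx1 := by
    have := lt_quantileE μX h1; rw [hqx1] at this; exact_mod_cast this
  have hx2b : qx2 ≤ b := by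
    have := quantileE_le μX h4; rw [hqx2] at this; exact_mod_cast this
  -- Y quantile at τ₁
  obtain ⟨qy1, hqy1⟩ := quantileE_exists_real μY hτ₁ h2
  have hy1c : qy1 ≤ c := by
    have := quantileE_le μY h2; rw [hqy1] at this; exact_mod_cast this
  -- Y quantile at τ₂ : greater than d, possibly ⊤
  have hy2 : (d : EReal) < quantileE μY τ₂ := lt_quantileE μY h3
  -- LHS is a real < b - a
  have hlhs : quantileE μX τ₂ - quantileE μX τ₁ = ((qx2 - qx1 : ℝ) : EReal) := by
    rw [hqx1, hqx2, ← EReal.coe_sub]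
  have hlhs_lt : (qx2 - qx1 : ℝ) < b - a := by linarith
  rw [hlhs, hqy1]
  rcases eq_top_or_lt_top (quantileE μY τ₂) with htop | hlt
  · rw [htop]
    rw [EReal.top_sub_coe]
    exact EReal.coe_lt_top _
  · have h2b := hy2.trans hlt
    lift quantileE μY τ₂ to ℝ using ⟨hlt.ne, ((EReal.bot_lt_coe d).trans hy2).ne'⟩ with qy2
    have hdy2 : d < qy2 := by exact_mod_cast hy2
    rw [← EReal.coe_sub]
    exact_mod_cast (by linarith : (qx2 - qx1 : ℝ) < qy2 - qy1)

/-- Theorem 1 of the paper: under a common-constant threshold shift,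
an ordinal CDF crossing implies the corresponding latent interquantile ranges are ordered. -/
theorem stmt0
    (μX μY : MeasureTheory.Measure ℝ)
    [IsProbabilityMeasure μX] [IsProbabilityMeasure μY]
    (J : ℕ) (hJ : 2 ≤ J)
    (γ : ℕ → ℝ) (hγ : ∀ j k, 1 ≤ j → j < k → k ≤ J - 1 → γ j < γ k)
    (Δ : ℕ → ℝ) (Δγ : ℝ) (hΔ : ∀ j, 1 ≤ j → j ≤ J - 1 → Δ j = Δγ)
    (FX FY : ℕ → ℝ)
    (hFX : ∀ j, 1 ≤ j → j ≤ J - 1 → FX j = cdfOf μX (γ j))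
    (hFY : ∀ j, 1 ≤ j → j ≤ J - 1 → FY j = cdfOf μY (γ j + Δ j))
    (j k : ℕ) (hj : 1 ≤ j) (hjk : j < k) (hk : k ≤ J - 1) :
    ((FX j < FY j ∧ FY k < FX k) →
      ∀ τ₁ τ₂ : ℝ, FX j < τ₁ → τ₁ ≤ FY j → FY k < τ₂ → τ₂ ≤ FX k →
        quantileE μX τ₂ - quantileE μX τ₁ < quantileE μY τ₂ - quantileE μY τ₁) ∧
    ((FY j < FX j ∧ FX k < FY k) →
      ∀ τ₁ τ₂ : ℝ, FY j < τ₁ → τ₁ ≤ FX j → FX k < τ₂ → τ₂ ≤ FY k →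
        quantileE μY τ₂ - quantileE μY τ₁ < quantileE μX τ₂ - quantileE μX τ₁) := by
  have hjJ : j ≤ J - 1 := le_of_lt (lt_of_lt_of_le hjk hk)
  have hk1 : 1 ≤ k := hj.trans hjk.le
  have hγjk : γ j < γ k := hγ j k hj hjk hk
  have hFXj := hFX j hj hjJ
  have hFXk := hFX k hk1 hk
  have hFYj := hFY j hj hjJ
  have hFYk := hFY k hk1 hk
  rw [hΔ j hj hjJ] at hFYj
  rw [hΔ k hk1 hk] at hFYk
  constructor
  · rintro ⟨-, -⟩ τ₁ τ₂ ht1 ht2 ht3 ht4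
    rw [hFXj] at ht1; rw [hFYj] at ht2; rw [hFYk] at ht3; rw [hFXk] at ht4
    exact key μX μY (γ j) (γ k) (γ j + Δγ) (γ k + Δγ) hγjk (by ring) τ₁ τ₂ ht1 ht2 ht3 ht4
  · rintro ⟨-, -⟩ τ₁ τ₂ ht1 ht2 ht3 ht4
    rw [hFYj] at ht1; rw [hFXj] at ht2; rw [hFXk] at ht3; rw [hFYk] at ht4
    exact key μY μX (γ j + Δγ) (γ k + Δγ) (γ j) (γ k) (by linarith) (by ring) τ₁ τ₂ ht1 ht2 ht3 ht4
end

section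
/- Suppose each threshold for Y is no smaller than the corresponding threshold for X: Δ_{γ,j} ≥ 0 for all j = 1,…,J−1. Define T_Y = ⋃_{j=1}^{J−1} T_{Yj}, where T_{Yj} = (F_Y(j), F_X(j)] if F_Y(j) < F_X(j) and T_{Yj} = ∅ otherwise. Then Q_Y*(τ) > Q_X*(τ) for every τ ∈ T_Y. -/
open MeasureTheory Set

lemma cdfOf_eq (μ : MeasureTheory.Measure ℝ) [IsProbabilityMeasure μ] (x : ℝ) :
    cdfOf μ x = ProbabilityTheory.cdf μ x := (ProbabilityTheory.cdf_eq_real μ x).symm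

lemma aux_lt_quantile (μ : MeasureTheory.Measure ℝ) [IsProbabilityMeasure μ]
    (τ c : ℝ) (h : cdfOf μ c < τ) : (c : EReal) < quantileE μ τ := by
  have hrc : ContinuousWithinAt (ProbabilityTheory.cdf μ) (Set.Ici c) c :=
    (ProbabilityTheory.cdf μ).right_continuous c
  have h' : ProbabilityTheory.cdf μ c < τ := by rwa [cdfOf_eq] at h
  have hev : ∀ᶠ x in nhdsWithin c (Set.Ici c), ProbabilityTheory.cdf μ x < τ :=
    hrc.eventually_lt continuousWithinAt_const h'
  rw [eventually_nhdsWithin_iff, Metric.eventually_nhds_iff] at hev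
  obtain ⟨ε, hε, hball⟩ := hev
  have hkey : ∀ y ∈ {y : EReal | ∃ x : ℝ, y = (x : EReal) ∧ τ ≤ cdfOf μ x},
      ((c + ε/2 : ℝ) : EReal) ≤ y := by
    rintro y ⟨x, rfl, hx⟩
    rw [EReal.coe_le_coe_iff]
    by_contra hlt
    push_neg at hlt
    rcases le_or_gt c x with hcx | hxc
    · have : ProbabilityTheory.cdf μ x < τ := by
        apply hball (show dist x c < ε by
          rw [Real.dist_eq, abs_of_nonneg (by linarith)]; linarith) hcx
      rw [cdfOf_eq] at hx; linarith
    · have hm : cdfOf μ x ≤ cdfOf μ c := by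
        rw [cdfOf_eq, cdfOf_eq]
        exact ProbabilityTheory.monotone_cdf μ hxc.le
      linarith
  calc (c : EReal) < ((c + ε/2 : ℝ) : EReal) := by
        rw [EReal.coe_lt_coe_iff]; linarith
    _ ≤ quantileE μ τ := le_sInf hkey

/-- if each threshold for `Y` is no smaller than the corresponding
threshold for `X` (`Δ_{γ,j} ≥ 0`), then for every
`τ ∈ T_Y = ⋃_{j : F_Y(j) < F_X(j)} (F_Y(j), F_X(j)]`, the latent `τ`-quantile of `Y*`
is strictly greater than that of `X*`.
(Here `Set.Ioc (FY j) (FX j)` is empty when `F_Y(j) ≥ F_X(j)`, matching `T_{Yj} = ∅`.) -/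
theorem stmt3
    (μX μY : MeasureTheory.Measure ℝ)
    [IsProbabilityMeasure μX] [IsProbabilityMeasure μY]
    (J : ℕ) (hJ : 2 ≤ J)
    (γ : ℕ → ℝ) (hγ : ∀ j k, 1 ≤ j → j < k → k ≤ J - 1 → γ j < γ k)
    (Δ : ℕ → ℝ) (hΔ : ∀ j, 1 ≤ j → j ≤ J - 1 → 0 ≤ Δ j)
    (FX FY : ℕ → ℝ)
    (hFX : ∀ j, 1 ≤ j → j ≤ J - 1 → FX j = cdfOf μX (γ j))
    (hFY : ∀ j, 1 ≤ j → j ≤ J - 1 → FY j = cdfOf μY (γ j + Δ j))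
    (τ : ℝ)
    (hτ : τ ∈ ⋃ j ∈ {j : ℕ | 1 ≤ j ∧ j ≤ J - 1 ∧ FY j < FX j}, Set.Ioc (FY j) (FX j)) :
    quantileE μX τ < quantileE μY τ := by
  simp only [Set.mem_iUnion, Set.mem_setOf_eq, Set.mem_Ioc] at hτ
  obtain ⟨j, ⟨hj1, hj2, _⟩, hτ1, hτ2⟩ := hτ
  have hX : quantileE μX τ ≤ (γ j : EReal) :=
    sInf_le ⟨γ j, rfl, by rw [← hFX j hj1 hj2]; exact hτ2⟩
  have hY : ((γ j + Δ j : ℝ) : EReal) < quantileE μY τ := by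
    apply aux_lt_quantile
    rw [← hFY j hj1 hj2]; exact hτ1
  have hγΔ : (γ j : EReal) ≤ ((γ j + Δ j : ℝ) : EReal) := by
    rw [EReal.coe_le_coe_iff]; linarith [hΔ j hj1 hj2]
  exact hX.trans_lt (hγΔ.trans_lt hY)
end

section
/- Under the estimation setting described in the context, fix categories j < k. Let 1 − α̃ be the √(1−α)-quantile of the distribution of Φ(max{−(D_X W)_j, (D_X W)_k}) and let 1 − β̃ be the √(1−α)-quantile of the distribution of Φ(max{(D_Y M)_j, −(D_Y M)_k}). Define ĈXU(j) = F̂_X(j) + z_{1−α̃} √(Σ̂_{X,jj}/n_X), ĈXL(k) = F̂_X(k) − z_{1−α̃} √(Σ̂_{X,kk}/n_X), ĈYL(j) = F̂_Y(j) − z_{1−β̃} √(Σ̂_{Y,jj}/n_Y), ĈYU(k) = F̂_Y(k) + z_{1−β̃} √(Σ̂_{Y,kk}/n_Y). If ĈXU(j) < ĈYL(j) and ĈYU(k) < ĈXL(k), set T̂_{Xj} × T̂_{Yk} = (ĈXU(j), ĈYL(j)] × (ĈYU(k), ĈXL(k)]; otherwise set it to the empty set. Define T_{Xj} = (F_X(j),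 F_Y(j)] if F_X(j) < F_Y(j) (else ∅) and T_{Yk} = (F_Y(k), F_X(k)] if F_Y(k) < F_X(k) (else ∅). Then liminf_{n_X, n_Y → ∞} P(T̂_{Xj} × T̂_{Yk} ⊆ T_{Xj} × T_{Yk}) ≥ 1 − α. -/
open MeasureTheory Matrix Filter Set

/-- Convergence in distribution (weak convergence of laws), via bounded continuous
test functions. -/
def TendstoInDistribution {Ω E : Type*} [MeasurableSpace Ω] [MeasurableSpace E]
    [TopologicalSpace E]
    (P : MeasureTheory.Measure Ω) (Z : ℕ → Ω → E) (ν : MeasureTheory.Measure E) : Prop :=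
  ∀ f : BoundedContinuousFunction E ℝ,
    Filter.Tendsto (fun n => ∫ ω, f (Z n ω) ∂P) Filter.atTop (nhds (∫ x, f x ∂ν))

/-- `ν` is the centered multivariate normal distribution `N(0, S)` on `ι → ℝ`. -/
def IsCenteredGaussianVec {ι : Type*} [Fintype ι] (ν : MeasureTheory.Measure (ι → ℝ))
    (S : Matrix ι ι ℝ) : Prop :=
  ∀ a : ι → ℝ,
    ν.map (fun x => ∑ i, a i * x i) =
      ProbabilityTheory.gaussianReal 0 (Real.toNNReal (a ⬝ᵥ S.mulVec a))

/-- Standard normal CDF `Φ`. -/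
noncomputable def stdNormalCDF (x : ℝ) : ℝ :=
  ProbabilityTheory.cdf (ProbabilityTheory.gaussianReal 0 1) x

/-- `p`-quantile of a distribution `μ` on ℝ: `inf {x : μ((−∞,x]) ≥ p}`. -/
noncomputable def quantileOf (μ : MeasureTheory.Measure ℝ) (p : ℝ) : ℝ :=
  sInf {x : ℝ | p ≤ (μ (Set.Iic x)).toReal}

/-- Standard normal quantile `z_p = Φ⁻¹(p)`. -/
noncomputable def zq (p : ℝ) : ℝ := sInf {x : ℝ | p ≤ stdNormalCDF x}


open ProbabilityTheory Topology
open scoped ENNReal NNReal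

section Aux

/-- quantile attainment for finite measures on ℝ -/
lemma measure_Iic_sInf_ge {μ : Measure ℝ} [IsFiniteMeasure μ] {p : ℝ}
    (hne : {x : ℝ | p ≤ (μ (Set.Iic x)).toReal}.Nonempty)
    (hbdd : BddBelow {x : ℝ | p ≤ (μ (Set.Iic x)).toReal}) :
    p ≤ (μ (Set.Iic (sInf {x : ℝ | p ≤ (μ (Set.Iic x)).toReal}))).toReal := by
  set S := {x : ℝ | p ≤ (μ (Set.Iic x)).toReal} with hS
  set q := sInf S with hq
  have hInter : (⋂ n : ℕ, Set.Iic (q + 1/(n+1))) = Set.Iic q := by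
    ext x
    simp only [Set.mem_iInter, Set.mem_Iic]
    constructor
    · intro h
      by_contra hx
      push_neg at hx
      obtain ⟨n, hn⟩ := exists_nat_one_div_lt (sub_pos.mpr hx)
      have := h n
      have : (1:ℝ)/(n+1) < x - q := by exact_mod_cast hn
      linarith [h n]
    · intro h n
      have : (0:ℝ) < 1/((n:ℝ)+1) := by positivity
      linarith
  have htend : Tendsto (fun n : ℕ => (μ (Set.Iic (q + 1/(n+1)))).toReal) atTop
      (𝓝 ((μ (Set.Iic q)).toReal)) := by
    have h1 : Tendsto (fun n : ℕ => μ (Set.Iic (q + 1/((n:ℝ)+1)))) atTop (𝓝 (μ (Set.Iic q))) := by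
      rw [← hInter]
      exact tendsto_measure_iInter_atTop
        (fun n => measurableSet_Iic.nullMeasurableSet)
        (fun a b hab => Set.Iic_subset_Iic.mpr (by
          have h2 : (1:ℝ)/((b:ℝ)+1) ≤ 1/((a:ℝ)+1) := by
            apply one_div_le_one_div_of_le
            · positivity
            · exact_mod_cast by omega
          linarith))
        ⟨0, measure_ne_top μ _⟩
    exact (ENNReal.tendsto_toReal (measure_ne_top μ _)).comp h1
  refine ge_of_tendsto htend (Filter.Eventually.of_forall fun n => ?_)
  have hq' : q < q + 1/((n:ℝ)+1) := by
    have : (0:ℝ) < 1/((n:ℝ)+1) := by positivity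
    linarith
  obtain ⟨s, hsS, hs⟩ := (csInf_lt_iff hbdd hne).mp hq'
  calc p ≤ (μ (Set.Iic s)).toReal := hsS
    _ ≤ (μ (Set.Iic (q + 1/((n:ℝ)+1)))).toReal :=
      ENNReal.toReal_mono (measure_ne_top μ _) (measure_mono (Set.Iic_subset_Iic.mpr hs.le))

lemma stdNormalCDF_eq (x : ℝ) :
    stdNormalCDF x = ((gaussianReal 0 1) (Set.Iic x)).toReal := (cdf_eq_real _ x).trans (measureReal_def _ _)

lemma gauss_vol : (volume : Measure ℝ) ≪ gaussianReal 0 1 :=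
  gaussianReal_absolutelyContinuous' 0 one_ne_zero

lemma stdNormalCDF_strictMono : StrictMono stdNormalCDF := by
  intro x y hxy
  have hsplit : (gaussianReal 0 1) (Set.Iic y)
      = (gaussianReal 0 1) (Set.Iic x) + (gaussianReal 0 1) (Set.Ioc x y) := by
    rw [← measure_union (Set.Iic_disjoint_Ioc le_rfl) measurableSet_Ioc,
      Set.Iic_union_Ioc_eq_Iic hxy.le]
  have hne : (gaussianReal 0 1) (Set.Ioc x y) ≠ 0 := by
    intro h0
    have := gauss_vol h0
    rw [Real.volume_Ioc] at this
    simp only [ENNReal.ofReal_eq_zero] at this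
    linarith
  rw [stdNormalCDF_eq, stdNormalCDF_eq, hsplit,
    ENNReal.toReal_add (measure_ne_top _ _) (measure_ne_top _ _)]
  have : 0 < ((gaussianReal 0 1) (Set.Ioc x y)).toReal :=
    ENNReal.toReal_pos hne (measure_ne_top _ _)
  linarith

lemma stdNormalCDF_mono : Monotone stdNormalCDF := stdNormalCDF_strictMono.monotone

lemma stdNormalCDF_pos (x : ℝ) : 0 < stdNormalCDF x := by
  rw [stdNormalCDF_eq]
  refine ENNReal.toReal_pos (fun h0 => ?_) (measure_ne_top _ _)
  have := gauss_vol h0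
  rw [Real.volume_Iic] at this
  exact ENNReal.top_ne_zero this

lemma stdNormalCDF_lt_one (x : ℝ) : stdNormalCDF x < 1 := by
  have hsplit : (gaussianReal 0 1) (Set.Iic x) + (gaussianReal 0 1) (Set.Ioi x) = 1 := by
    rw [← measure_union (Set.Iic_disjoint_Ioi le_rfl) measurableSet_Ioi,
      Set.Iic_union_Ioi, measure_univ]
  have hne : (gaussianReal 0 1) (Set.Ioi x) ≠ 0 := by
    intro h0
    have := gauss_vol h0
    rw [Real.volume_Ioi] at this
    exact ENNReal.top_ne_zero this
  have hlt : (gaussianReal 0 1) (Set.Iic x) < 1 := by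
    calc (gaussianReal 0 1) (Set.Iic x)
        < (gaussianReal 0 1) (Set.Iic x) + (gaussianReal 0 1) (Set.Ioi x) :=
          ENNReal.lt_add_right (measure_ne_top _ _) hne
      _ = 1 := hsplit
  rw [stdNormalCDF_eq]
  have := ENNReal.toReal_lt_toReal (measure_ne_top (gaussianReal 0 1) (Set.Iic x)) ENNReal.one_ne_top |>.mpr hlt
  simpa using this

lemma stdNormalCDF_measurable : Measurable stdNormalCDF := stdNormalCDF_mono.measurable

/-- key property of the standard normal quantile -/
lemma stdNormalCDF_zq_ge {p : ℝ} (hp0 : 0 < p) (hp1 : p < 1) : p ≤ stdNormalCDF (zq p) := by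
  have hseteq : {x : ℝ | p ≤ stdNormalCDF x}
      = {x : ℝ | p ≤ ((gaussianReal 0 1) (Set.Iic x)).toReal} := by
    ext x; simp [stdNormalCDF_eq]
  have hne : {x : ℝ | p ≤ ((gaussianReal 0 1) (Set.Iic x)).toReal}.Nonempty := by
    have := (tendsto_cdf_atTop (gaussianReal 0 1)).eventually (eventually_ge_nhds hp1)
    obtain ⟨x, hx⟩ := this.exists
    exact ⟨x, by rwa [Set.mem_setOf_eq, ← stdNormalCDF_eq]⟩
  have hbdd : BddBelow {x : ℝ | p ≤ ((gaussianReal 0 1) (Set.Iic x)).toReal} := by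
    have := (tendsto_cdf_atBot (gaussianReal 0 1)).eventually (eventually_lt_nhds hp0)
    obtain ⟨x0, hx0⟩ := this.exists
    refine ⟨x0, fun y hy => ?_⟩
    by_contra hxy
    push_neg at hxy
    have : stdNormalCDF y ≤ stdNormalCDF x0 := stdNormalCDF_mono hxy.le
    rw [Set.mem_setOf_eq, ← stdNormalCDF_eq] at hy
    have hx0' : stdNormalCDF x0 < p := hx0
    linarith
  have := measure_Iic_sInf_ge (μ := gaussianReal 0 1) hne hbdd
  rw [← stdNormalCDF_eq] at this
  unfold zq
  rwa [hseteq]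

lemma coord_null {d : ℕ} {ν : Measure (Fin d → ℝ)} {S : Matrix (Fin d) (Fin d) ℝ}
    (hν : IsCenteredGaussianVec ν S) {p : Fin d} (hp : 0 < S p p) (c : ℝ) :
    ν {w | w p = c} = 0 := by
  classical
  set a : Fin d → ℝ := fun l => if l = p then 1 else 0 with ha
  have hf : (fun x : Fin d → ℝ => ∑ i, a i * x i) = fun w => w p := by
    funext w
    simp [ha, ite_mul]
  have hvar : a ⬝ᵥ S.mulVec a = S p p := by
    simp [ha, dotProduct, Matrix.mulVec, ite_mul, mul_ite]
  have hmap := hν a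
  rw [hf, hvar] at hmap
  have : ν {w | w p = c} = (ν.map (fun w : Fin d → ℝ => w p)) {c} := by
    rw [Measure.map_apply (measurable_pi_apply p) (measurableSet_singleton c)]
    rfl
  rw [this, hmap]
  refine gaussianReal_absolutelyContinuous 0 ?_ ?_
  · simp [Real.toNNReal_eq_zero, not_le, hp]
  · exact Real.volume_singleton

lemma minmul {z L U s : ℝ} (h1 : L ≤ s) (h2 : s ≤ U) : min (z*L) (z*U) ≤ z*s := by
  rcases le_total 0 z with hz | hz
  · exact (min_le_left _ _).trans (mul_le_mul_of_nonneg_left h1 hz)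
  · exact (min_le_right _ _).trans (mul_le_mul_of_nonpos_left h2 hz)

lemma keyLim {d : ℕ} {Ω : Type*} [MeasurableSpace Ω] (P : Measure Ω) [IsProbabilityMeasure P]
    (Fh : ℕ → Ω → Fin d → ℝ) (hFh : ∀ n, Measurable (Fh n)) (F : Fin d → ℝ)
    (S : Matrix (Fin d) (Fin d) ℝ) (p q : Fin d) (hSp : 0 < S p p) (hSq : 0 < S q q)
    (ν : Measure (Fin d → ℝ)) [IsProbabilityMeasure ν]
    (hν : IsCenteredGaussianVec ν S)
    (hconv : TendstoInDistribution P (fun n ω i => Real.sqrt n * (Fh n ω i - F i)) ν)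
    (Sh : ℕ → Ω → Matrix (Fin d) (Fin d) ℝ)
    (hShp : ∀ ε > (0:ℝ), Tendsto (fun n => P {ω | ε ≤ |Sh n ω p p - S p p|}) atTop (𝓝 0))
    (hShq : ∀ ε > (0:ℝ), Tendsto (fun n => P {ω | ε ≤ |Sh n ω q q - S q q|}) atTop (𝓝 0))
    (z : ℝ) :
    (ν {w | -(w p) ≤ z * Real.sqrt (S p p) ∧ w q ≤ z * Real.sqrt (S q q)}).toReal ≤
      liminf (fun n => (P {ω | F p ≤ Fh n ω p + z * Real.sqrt (Sh n ω p p / n) ∧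
        Fh n ω q - z * Real.sqrt (Sh n ω q q / n) ≤ F q}).toReal) atTop := by
  set Z : ℕ → Ω → Fin d → ℝ := fun n ω i => Real.sqrt n * (Fh n ω i - F i) with hZ
  have hZmeas : ∀ n, Measurable (Z n) := fun n => measurable_pi_lambda _ fun i =>
    (((measurable_pi_apply i).comp (hFh n)).sub measurable_const).const_mul _
  set A : ℕ → Set Ω := fun n => {ω | F p ≤ Fh n ω p + z * Real.sqrt (Sh n ω p p / n) ∧
    Fh n ω q - z * Real.sqrt (Sh n ω q q / n) ≤ F q} with hA
  set a : ℕ → ℝ := fun n => (P (A n)).toReal with ha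
  set L : ℝ := liminf a atTop with hL
  have ha1 : ∀ n, a n ≤ 1 := fun n => by
    rw [ha]
    exact ENNReal.toReal_le_of_le_ofReal one_pos.le (by simpa using prob_le_one)
  have hcob : IsCoboundedUnder (· ≥ ·) atTop a :=
    isCoboundedUnder_ge_of_le atTop (x := 1) ha1
  have hL0 : 0 ≤ L :=
    le_liminf_of_le hcob (Eventually.of_forall fun n => ENNReal.toReal_nonneg)
  -- weak convergence of laws
  set μs : ℕ → ProbabilityMeasure (Fin d → ℝ) := fun n =>
    ⟨P.map (Z n), Measure.isProbabilityMeasure_map (hZmeas n).aemeasurable⟩ with hμs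
  set νP : ProbabilityMeasure (Fin d → ℝ) := ⟨ν, inferInstance⟩ with hνP
  have htend : Tendsto μs atTop (𝓝 νP) := by
    rw [ProbabilityMeasure.tendsto_iff_forall_integral_tendsto]
    intro f
    have heq : (fun n => ∫ x, f x ∂(μs n : Measure (Fin d → ℝ)))
        = fun n => ∫ ω, f (Z n ω) ∂P := by
      funext n
      exact integral_map (hZmeas n).aemeasurable f.continuous.measurable.aestronglyMeasurable
    rw [heq]
    exact hconv f
  have hopen : ∀ G : Set (Fin d → ℝ), IsOpen G →
      ν G ≤ atTop.liminf (fun n => P (Z n ⁻¹' G)) := by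
    intro G hG
    have h := ProbabilityMeasure.le_liminf_measure_open_of_tendsto htend hG
    have heq : (fun n => (μs n : Measure (Fin d → ℝ)) G) = fun n => P (Z n ⁻¹' G) := by
      funext n
      exact Measure.map_apply (hZmeas n) hG.measurableSet
    rwa [heq] at h
  -- the approximating open sets
  set ε : ℕ → ℝ := fun i => 1/((i:ℝ)+1) with hε
  have hεpos : ∀ i, 0 < ε i := fun i => by positivity
  have hεanti : ∀ {i i' : ℕ}, i ≤ i' → ε i' ≤ ε i := fun {i i'} h => by
    apply one_div_le_one_div_of_le
    · positivity
    · exact_mod_cast by omega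
  set t1 : ℕ → ℝ := fun i =>
    min (z * Real.sqrt (S p p - ε i)) (z * Real.sqrt (S p p + ε i)) with ht1
  set t2 : ℕ → ℝ := fun i =>
    min (z * Real.sqrt (S q q - ε i)) (z * Real.sqrt (S q q + ε i)) with ht2
  have htmono : ∀ (c : ℝ) {i i' : ℕ}, i ≤ i' →
      min (z * Real.sqrt (c - ε i)) (z * Real.sqrt (c + ε i)) ≤
      min (z * Real.sqrt (c - ε i')) (z * Real.sqrt (c + ε i')) := by
    intro c i i' h
    have h1 := hεanti h
    have h2 := hεpos i
    have h3 := hεpos i'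
    refine le_min (minmul ?_ ?_) (minmul ?_ ?_) <;> apply Real.sqrt_le_sqrt <;> linarith
  have htbdd : ∀ (c : ℝ) (i : ℕ),
      min (z * Real.sqrt (c - ε i)) (z * Real.sqrt (c + ε i)) ≤ z * Real.sqrt c := by
    intro c i
    have h2 := hεpos i
    refine minmul ?_ ?_ <;> apply Real.sqrt_le_sqrt <;> linarith
  have htlim : ∀ c : ℝ, Tendsto (fun i =>
      min (z * Real.sqrt (c - ε i)) (z * Real.sqrt (c + ε i))) atTop (𝓝 (z * Real.sqrt c)) := by
    intro c
    have hcont : Continuous (fun e : ℝ =>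
        min (z * Real.sqrt (c - e)) (z * Real.sqrt (c + e))) := by
      apply Continuous.min
      · exact continuous_const.mul (Real.continuous_sqrt.comp (continuous_const.sub continuous_id))
      · exact continuous_const.mul (Real.continuous_sqrt.comp (continuous_const.add continuous_id))
    have he : Tendsto ε atTop (𝓝 0) := tendsto_one_div_add_atTop_nhds_zero_nat
    have := (hcont.tendsto 0).comp he
    simpa [Function.comp_def] using this
  set O : ℕ → Set (Fin d → ℝ) := fun i => {w | -(w p) < t1 i ∧ w q < t2 i} with hO
  have hOopen : ∀ i, IsOpen (O i) := by
    intro i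
    have : O i = ((fun w : Fin d → ℝ => -(w p)) ⁻¹' Set.Iio (t1 i)) ∩
        ((fun w : Fin d → ℝ => w q) ⁻¹' Set.Iio (t2 i)) := rfl
    rw [this]
    exact (isOpen_Iio.preimage ((continuous_apply p).neg)).inter
      (isOpen_Iio.preimage (continuous_apply q))
  have hOmono : Monotone O := by
    intro i i' h w hw
    exact ⟨lt_of_lt_of_le hw.1 (htmono _ h), lt_of_lt_of_le hw.2 (htmono _ h)⟩
  -- C0 and null boundary
  set C0 : Set (Fin d → ℝ) :=
    {w | -(w p) ≤ z * Real.sqrt (S p p) ∧ w q ≤ z * Real.sqrt (S q q)} with hC0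
  set H : Set (Fin d → ℝ) :=
    {w | w p = -(z * Real.sqrt (S p p))} ∪ {w | w q = z * Real.sqrt (S q q)} with hH
  have hHnull : ν H = 0 :=
    measure_union_null (coord_null hν hSp _) (coord_null hν hSq _)
  have hC0sub : C0 ⊆ (⋃ i, O i) ∪ H := by
    rintro w ⟨h1, h2⟩
    by_cases e1 : w p = -(z * Real.sqrt (S p p))
    · exact Or.inr (Or.inl e1)
    by_cases e2 : w q = z * Real.sqrt (S q q)
    · exact Or.inr (Or.inr e2)
    left
    have h1' : -(w p) < z * Real.sqrt (S p p) :=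
      lt_of_le_of_ne h1 (fun h => e1 (by linarith))
    have h2' : w q < z * Real.sqrt (S q q) := lt_of_le_of_ne h2 e2
    have hev1 := (htlim (S p p)).eventually (eventually_gt_nhds h1')
    have hev2 := (htlim (S q q)).eventually (eventually_gt_nhds h2')
    obtain ⟨i, hi1, hi2⟩ := (hev1.and hev2).exists
    exact Set.mem_iUnion.mpr ⟨i, hi1, hi2⟩
  have hC0le : ν C0 ≤ ν (⋃ i, O i) := by
    calc ν C0 ≤ ν ((⋃ i, O i) ∪ H) := measure_mono hC0sub
      _ ≤ ν (⋃ i, O i) + ν H := measure_union_le _ _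
      _ = ν (⋃ i, O i) := by rw [hHnull, add_zero]
  have htendU : Tendsto (fun i => ν (O i)) atTop (𝓝 (ν (⋃ i, O i))) :=
    tendsto_measure_iUnion_atTop hOmono
  -- key per-i bound
  have hkey : ∀ i, (ν (O i)).toReal ≤ L := by
    intro i
    set G : ℕ → Set Ω := fun n =>
      {ω | |Sh n ω p p - S p p| < ε i ∧ |Sh n ω q q - S q q| < ε i} with hG
    have hGc : Tendsto (fun n => P (G n)ᶜ) atTop (𝓝 0) := by
      have hsub : ∀ n, (G n)ᶜ ⊆
          {ω | ε i ≤ |Sh n ω p p - S p p|} ∪ {ω | ε i ≤ |Sh n ω q q - S q q|} := by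
        intro n ω hω
        simp only [hG, Set.mem_compl_iff, Set.mem_setOf_eq, not_and_or, not_lt] at hω
        simpa using hω
      have hbound : ∀ n, P (G n)ᶜ ≤
          P {ω | ε i ≤ |Sh n ω p p - S p p|} + P {ω | ε i ≤ |Sh n ω q q - S q q|} :=
        fun n => (measure_mono (hsub n)).trans (measure_union_le _ _)
      have hsum : Tendsto (fun n => P {ω | ε i ≤ |Sh n ω p p - S p p|}
          + P {ω | ε i ≤ |Sh n ω q q - S q q|}) atTop (𝓝 0) := by
        have := (hShp _ (hεpos i)).add (hShq _ (hεpos i))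
        simpa using this
      exact tendsto_of_tendsto_of_tendsto_of_le_of_le tendsto_const_nhds hsum
        (fun n => zero_le) hbound
    have hincl : ∀ n, 1 ≤ n → Z n ⁻¹' O i ∩ G n ⊆ A n := by
      intro n hn ω hω
      obtain ⟨hOmem, hGmem⟩ := hω
      obtain ⟨hG1, hG2⟩ := hGmem
      have hnpos : (0:ℝ) < Real.sqrt n := Real.sqrt_pos.mpr (by exact_mod_cast hn)
      have habs1 := abs_lt.mp hG1
      have habs2 := abs_lt.mp hG2
      have hb1 : t1 i ≤ z * Real.sqrt (Sh n ω p p) := by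
        refine minmul ?_ ?_ <;> apply Real.sqrt_le_sqrt <;> linarith [habs1.1, habs1.2]
      have hb2 : t2 i ≤ z * Real.sqrt (Sh n ω q q) := by
        refine minmul ?_ ?_ <;> apply Real.sqrt_le_sqrt <;> linarith [habs2.1, habs2.2]
      have hO1 : -(Z n ω p) < t1 i := hOmem.1
      have hO2 : Z n ω q < t2 i := hOmem.2
      have hsd : ∀ b : ℝ, Real.sqrt (b / n) = Real.sqrt b / Real.sqrt n :=
        fun b => Real.sqrt_div' b (Nat.cast_nonneg n)
      constructor
      · have hlt : Real.sqrt n * (F p - Fh n ω p) < z * Real.sqrt (Sh n ω p p) := by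
          have heq : -(Z n ω p) = Real.sqrt n * (F p - Fh n ω p) := by
            simp only [hZ]; ring
          rw [heq] at hO1
          exact lt_of_lt_of_le hO1 hb1
        have hdiv : F p - Fh n ω p < z * Real.sqrt (Sh n ω p p) / Real.sqrt n :=
          (lt_div_iff₀' hnpos).mpr hlt
        have : z * Real.sqrt (Sh n ω p p / n) = z * Real.sqrt (Sh n ω p p) / Real.sqrt n := by
          rw [hsd, mul_div_assoc]
        rw [this]
        linarith
      · have hlt : Real.sqrt n * (Fh n ω q - F q) < z * Real.sqrt (Sh n ω q q) := by
          have heq : Z n ω q = Real.sqrt n * (Fh n ω q - F q) := rfl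
          rw [heq] at hO2
          exact lt_of_lt_of_le hO2 hb2
        have hdiv : Fh n ω q - F q < z * Real.sqrt (Sh n ω q q) / Real.sqrt n :=
          (lt_div_iff₀' hnpos).mpr hlt
        have : z * Real.sqrt (Sh n ω q q / n) = z * Real.sqrt (Sh n ω q q) / Real.sqrt n := by
          rw [hsd, mul_div_assoc]
        rw [this]
        linarith
    -- delta argument
    set r := (ν (O i)).toReal with hr
    by_contra hcon
    push_neg at hcon
    set δ := (r - L) / 2 with hδdef
    have hδ : 0 < δ := by simp only [hδdef]; linarith
    have hgoal : r - δ ≤ L := by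
      by_cases hrs : r ≤ δ/2
      · linarith
      push_neg at hrs
      set c : ℝ≥0∞ := ENNReal.ofReal (r - δ/2) with hc
      have hclt : c < ν (O i) := by
        have hh : ν (O i) = ENNReal.ofReal r := (ENNReal.ofReal_toReal (measure_ne_top _ _)).symm
        rw [hh, hc]
        exact (ENNReal.ofReal_lt_ofReal_iff (by linarith)).mpr (by linarith)
      have hev1 : ∀ᶠ n in atTop, c < P (Z n ⁻¹' O i) :=
        eventually_lt_of_lt_liminf (lt_of_lt_of_le hclt (hopen _ (hOopen i)))
      have hev2 : ∀ᶠ n in atTop, P (G n)ᶜ < ENNReal.ofReal (δ/2) :=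
        hGc.eventually_lt_const (ENNReal.ofReal_pos.mpr (by linarith))
      have hev3 : ∀ᶠ n : ℕ in atTop, 1 ≤ n := eventually_ge_atTop 1
      have hev : ∀ᶠ n in atTop, r - δ ≤ a n := by
        filter_upwards [hev1, hev2, hev3] with n h1 h2 h3
        have hP : P (Z n ⁻¹' O i) ≤ P (A n) + P (G n)ᶜ := by
          have hss : Z n ⁻¹' O i ⊆ A n ∪ (G n)ᶜ := by
            intro ω hω
            by_cases hg : ω ∈ G n
            · exact Or.inl (hincl n h3 ⟨hω, hg⟩)
            · exact Or.inr hg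
          exact (measure_mono hss).trans (measure_union_le _ _)
        have h4 : c < P (A n) + ENNReal.ofReal (δ/2) :=
          lt_of_lt_of_le h1 (hP.trans (add_le_add_right h2.le _))
        have hne : P (A n) + ENNReal.ofReal (δ/2) ≠ ⊤ :=
          ENNReal.add_ne_top.mpr ⟨measure_ne_top _ _, ENNReal.ofReal_ne_top⟩
        have h5 := ENNReal.toReal_mono hne h4.le
        rw [ENNReal.toReal_add (measure_ne_top _ _) ENNReal.ofReal_ne_top,
          ENNReal.toReal_ofReal (by linarith : (0:ℝ) ≤ δ/2), hc,
          ENNReal.toReal_ofReal (by linarith : (0:ℝ) ≤ r - δ/2)] at h5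
        simp only [ha]
        linarith
      exact le_liminf_of_le hcob hev
    simp only [hδdef] at hgoal
    linarith
  -- conclude
  have h1 : (ν (⋃ i, O i)).toReal ≤ L :=
    le_of_tendsto ((ENNReal.tendsto_toReal (measure_ne_top _ _)).comp htendU)
      (Eventually.of_forall hkey)
  exact le_trans (ENNReal.toReal_mono (measure_ne_top _ _) hC0le) h1

lemma quant_main {d : ℕ} (ν : Measure (Fin d → ℝ)) [IsProbabilityMeasure ν]
    (S : Matrix (Fin d) (Fin d) ℝ) (p q : Fin d) (hSp : 0 < S p p) (hSq : 0 < S q q)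
    {α : ℝ} (hα : α ∈ Set.Ioo (0:ℝ) 1) {qv : ℝ}
    (hqv : qv = quantileOf
      (ν.map (fun w => stdNormalCDF
        (max (-(w p / Real.sqrt (S p p))) (w q / Real.sqrt (S q q))))) (Real.sqrt (1 - α))) :
    Real.sqrt (1 - α) ≤
      (ν {w | -(w p) ≤ zq qv * Real.sqrt (S p p) ∧ w q ≤ zq qv * Real.sqrt (S q q)}).toReal := by
  obtain ⟨hα0, hα1⟩ := hα
  set p0 := Real.sqrt (1 - α) with hp0def
  have hp00 : 0 < p0 := Real.sqrt_pos.mpr (by linarith)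
  have hp01 : p0 < 1 := by
    have h := Real.sqrt_lt_sqrt (by linarith : (0:ℝ) ≤ 1 - α) (by linarith : 1 - α < 1)
    simpa [hp0def] using h
  set m : (Fin d → ℝ) → ℝ :=
    fun w => max (-(w p / Real.sqrt (S p p))) (w q / Real.sqrt (S q q)) with hm
  have hmmeas : Measurable m := by
    apply Measurable.max
    · exact ((measurable_pi_apply p).div_const _).neg
    · exact (measurable_pi_apply q).div_const _
  set g : (Fin d → ℝ) → ℝ := fun w => stdNormalCDF (m w) with hg
  have hgmeas : Measurable g := stdNormalCDF_measurable.comp hmmeas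
  set μ' := ν.map g with hμ'
  haveI : IsProbabilityMeasure μ' := Measure.isProbabilityMeasure_map hgmeas.aemeasurable
  have hmapIic : ∀ x : ℝ, μ' (Set.Iic x) = ν {w | g w ≤ x} := fun x => by
    rw [hμ', Measure.map_apply hgmeas measurableSet_Iic]; rfl
  set S0 := {x : ℝ | p0 ≤ (μ' (Set.Iic x)).toReal} with hS0
  -- lower bound
  have hlb : ∃ x0 : ℝ, 0 < x0 ∧ (μ' (Set.Iic x0)).toReal < p0 := by
    have hInter : (⋂ n : ℕ, Set.Iic ((1:ℝ)/(n+1))) = Set.Iic 0 := by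
      ext x
      simp only [Set.mem_iInter, Set.mem_Iic]
      constructor
      · intro h
        by_contra hx
        push_neg at hx
        obtain ⟨n, hn⟩ := exists_nat_one_div_lt hx
        have h2 : (1:ℝ)/(n+1) < x := by exact_mod_cast hn
        linarith [h n]
      · intro h n
        have : (0:ℝ) < 1/((n:ℝ)+1) := by positivity
        linarith
    have hIic0 : μ' (Set.Iic (0:ℝ)) = 0 := by
      rw [hmapIic]
      convert measure_empty
      · ext w
        simp only [Set.mem_setOf_eq, Set.mem_empty_iff_false, iff_false, not_le]
        exact stdNormalCDF_pos (m w)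
      · infer_instance
    have htd : Tendsto (fun n : ℕ => (μ' (Set.Iic ((1:ℝ)/(n+1)))).toReal) atTop (𝓝 0) := by
      have h1 : Tendsto (fun n : ℕ => μ' (Set.Iic ((1:ℝ)/(n+1)))) atTop (𝓝 (μ' (Set.Iic 0))) := by
        rw [← hInter]
        refine tendsto_measure_iInter_atTop (fun n => measurableSet_Iic.nullMeasurableSet)
          (fun a b hab => Set.Iic_subset_Iic.mpr ?_) ⟨0, measure_ne_top μ' _⟩
        apply one_div_le_one_div_of_le
        · positivity
        · exact_mod_cast by omega
      rw [hIic0] at h1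
      simpa [Function.comp_def] using (ENNReal.tendsto_toReal (by simp)).comp h1
    obtain ⟨n, hn⟩ := (htd.eventually (eventually_lt_nhds hp00)).exists
    exact ⟨1/((n:ℝ)+1), by positivity, hn⟩
  obtain ⟨x0, hx0pos, hx0⟩ := hlb
  -- upper bound
  have hub : ∃ x1 : ℝ, x1 < 1 ∧ x1 ∈ S0 := by
    have hUnion : (⋃ n : ℕ, Set.Iic ((1:ℝ) - 1/(n+1))) = Set.Iio 1 := by
      ext x
      simp only [Set.mem_iUnion, Set.mem_Iic, Set.mem_Iio]
      constructor
      · rintro ⟨n, hn⟩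
        have : (0:ℝ) < 1/((n:ℝ)+1) := by positivity
        linarith
      · intro h
        obtain ⟨n, hn⟩ := exists_nat_one_div_lt (by linarith : (0:ℝ) < 1 - x)
        have h2 : (1:ℝ)/(n+1) < 1 - x := by exact_mod_cast hn
        exact ⟨n, by linarith⟩
    have hIio1 : μ' (Set.Iio (1:ℝ)) = 1 := by
      rw [hμ', Measure.map_apply hgmeas measurableSet_Iio]
      have : g ⁻¹' Set.Iio 1 = Set.univ := by
        ext w
        simp only [Set.mem_preimage, Set.mem_Iio, Set.mem_univ, iff_true]
        exact stdNormalCDF_lt_one (m w)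
      rw [this, measure_univ]
    have htd : Tendsto (fun n : ℕ => (μ' (Set.Iic ((1:ℝ) - 1/(n+1)))).toReal) atTop (𝓝 1) := by
      have h1 : Tendsto (fun n : ℕ => μ' (Set.Iic ((1:ℝ) - 1/(n+1)))) atTop
          (𝓝 (μ' (⋃ n : ℕ, Set.Iic ((1:ℝ) - 1/(n+1))))) := by
        apply tendsto_measure_iUnion_atTop
        intro a b hab
        apply Set.Iic_subset_Iic.mpr
        have : (1:ℝ)/((b:ℝ)+1) ≤ 1/((a:ℝ)+1) := by
          apply one_div_le_one_div_of_le
          · positivity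
          · exact_mod_cast by omega
        linarith
      rw [hUnion, hIio1] at h1
      simpa [Function.comp_def] using (ENNReal.tendsto_toReal (by simp)).comp h1
    obtain ⟨n, hn⟩ := (htd.eventually (eventually_gt_nhds hp01)).exists
    refine ⟨1 - 1/((n:ℝ)+1), by
      have : (0:ℝ) < 1/((n:ℝ)+1) := by positivity
      linarith, hn.le⟩
  obtain ⟨x1, hx1lt, hx1mem⟩ := hub
  have hSne : S0.Nonempty := ⟨x1, hx1mem⟩
  have hSbdd : BddBelow S0 := by
    refine ⟨x0, fun y hy => ?_⟩
    by_contra hxy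
    push_neg at hxy
    have h1 : (μ' (Set.Iic y)).toReal ≤ (μ' (Set.Iic x0)).toReal :=
      ENNReal.toReal_mono (measure_ne_top _ _) (measure_mono (Set.Iic_subset_Iic.mpr hxy.le))
    have h2 : p0 ≤ (μ' (Set.Iic y)).toReal := hy
    linarith
  have hqveq : qv = sInf S0 := hqv
  have hqv1 : qv < 1 := by
    rw [hqveq]
    exact lt_of_le_of_lt (csInf_le hSbdd hx1mem) hx1lt
  have hqv0 : 0 < qv := by
    rw [hqveq]
    refine lt_of_lt_of_le hx0pos (le_csInf hSne fun y hy => ?_)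
    by_contra hxy
    push_neg at hxy
    have h1 : (μ' (Set.Iic y)).toReal ≤ (μ' (Set.Iic x0)).toReal :=
      ENNReal.toReal_mono (measure_ne_top _ _) (measure_mono (Set.Iic_subset_Iic.mpr hxy.le))
    have h2 : p0 ≤ (μ' (Set.Iic y)).toReal := hy
    linarith
  have hattain : p0 ≤ (μ' (Set.Iic qv)).toReal := by
    rw [hqveq]; exact measure_Iic_sInf_ge hSne hSbdd
  have hzq : qv ≤ stdNormalCDF (zq qv) := stdNormalCDF_zq_ge hqv0 hqv1
  -- subset step
  have hsub : {w : Fin d → ℝ | g w ≤ qv} ⊆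
      {w | -(w p) ≤ zq qv * Real.sqrt (S p p) ∧ w q ≤ zq qv * Real.sqrt (S q q)} := by
    intro w hw
    have hmle : m w ≤ zq qv := by
      by_contra hlt
      push_neg at hlt
      have := stdNormalCDF_strictMono hlt
      have hgw : g w ≤ qv := hw
      rw [hg] at hgw
      linarith
    have hsp : (0:ℝ) < Real.sqrt (S p p) := Real.sqrt_pos.mpr hSp
    have hsq : (0:ℝ) < Real.sqrt (S q q) := Real.sqrt_pos.mpr hSq
    have h1 : -(w p / Real.sqrt (S p p)) ≤ zq qv := le_trans (le_max_left _ _) hmle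
    have h2 : w q / Real.sqrt (S q q) ≤ zq qv := le_trans (le_max_right _ _) hmle
    constructor
    · exact (div_le_iff₀ hsp).mp (by rw [neg_div]; exact h1)
    · exact (div_le_iff₀ hsq).mp h2
  calc p0 ≤ (μ' (Set.Iic qv)).toReal := hattain
    _ = (ν {w | g w ≤ qv}).toReal := by rw [hmapIic]
    _ ≤ _ := ENNReal.toReal_mono (measure_ne_top _ _) (measure_mono hsub)

end Aux

/-- Theorem 4 of the paper: asymptotic validity of the inner confidence
set for a fixed pair of categories `j < k`:
`T̂_{Xj} × T̂_{Yk} = (ĈXU(j), ĈYL(j)] × (ĈYU(k), ĈXL(k)]` (empty if either interval is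
degenerate) is contained in `T_{Xj} × T_{Yk} = (F_X(j), F_Y(j)] × (F_Y(k), F_X(k)]`
with asymptotic probability at least `1 − α`.  `Set.Ioc c d` is empty when `c ≥ d`,
matching the "otherwise ∅" clauses; the `X` and `Y` samples are independent, modeled by
the product probability space `(ΩX × ΩY, PX ⊗ PY)`. -/
theorem stmt6
    {ΩX ΩY : Type*} [MeasurableSpace ΩX] [MeasurableSpace ΩY]
    (PX : MeasureTheory.Measure ΩX) (PY : MeasureTheory.Measure ΩY)
    [IsProbabilityMeasure PX] [IsProbabilityMeasure PY]
    (J : ℕ) (hJ : 2 ≤ J)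
    (α : ℝ) (hα : α ∈ Set.Ioo (0 : ℝ) 1)
    (FX FY : Fin (J - 1) → ℝ)
    (hFX01 : ∀ j, FX j ∈ Set.Icc (0 : ℝ) 1) (hFY01 : ∀ j, FY j ∈ Set.Icc (0 : ℝ) 1)
    (FXhat : ℕ → ΩX → Fin (J - 1) → ℝ) (FYhat : ℕ → ΩY → Fin (J - 1) → ℝ)
    (hFXhatMeas : ∀ n, Measurable (FXhat n)) (hFYhatMeas : ∀ n, Measurable (FYhat n))
    (SX SY : Matrix (Fin (J - 1)) (Fin (J - 1)) ℝ)
    (hSX : SX.PosSemidef) (hSY : SY.PosSemidef)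
    (hSXdiag : ∀ j, 0 < SX j j) (hSYdiag : ∀ j, 0 < SY j j)
    (νX νY : MeasureTheory.Measure (Fin (J - 1) → ℝ))
    [IsProbabilityMeasure νX] [IsProbabilityMeasure νY]
    (hνX : IsCenteredGaussianVec νX SX) (hνY : IsCenteredGaussianVec νY SY)
    (hXconv : TendstoInDistribution PX
      (fun n ωx j => Real.sqrt n * (FXhat n ωx j - FX j)) νX)
    (hYconv : TendstoInDistribution PY
      (fun n ωy j => Real.sqrt n * (FYhat n ωy j - FY j)) νY)
    (SXhat : ℕ → ΩX → Matrix (Fin (J - 1)) (Fin (J - 1)) ℝ)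
    (SYhat : ℕ → ΩY → Matrix (Fin (J - 1)) (Fin (J - 1)) ℝ)
    (hSXhatMeas : ∀ n j k, Measurable fun ωx => SXhat n ωx j k)
    (hSYhatMeas : ∀ n j k, Measurable fun ωy => SYhat n ωy j k)
    (hSXhat : ∀ j k : Fin (J - 1), ∀ ε > (0 : ℝ),
      Filter.Tendsto (fun n => PX {ωx | ε ≤ |SXhat n ωx j k - SX j k|})
        Filter.atTop (nhds 0))
    (hSYhat : ∀ j k : Fin (J - 1), ∀ ε > (0 : ℝ),
      Filter.Tendsto (fun n => PY {ωy | ε ≤ |SYhat n ωy j k - SY j k|})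
        Filter.atTop (nhds 0))
    -- the fixed pair of categories j < k
    (j k : Fin (J - 1)) (hjk : j < k)
    -- 1 − α̃ is the √(1−α)-quantile of the distribution of Φ(max{−(D_X W)_j, (D_X W)_k})
    (αt : ℝ)
    (hαt : 1 - αt = quantileOf
      (νX.map (fun w => stdNormalCDF
        (max (-(w j / Real.sqrt (SX j j))) (w k / Real.sqrt (SX k k)))))
      (Real.sqrt (1 - α)))
    -- 1 − β̃ is the √(1−α)-quantile of the distribution of Φ(max{(D_Y M)_j, −(D_Y M)_k})
    (βt : ℝ)
    (hβt : 1 - βt = quantileOf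
      (νY.map (fun w => stdNormalCDF
        (max (w j / Real.sqrt (SY j j)) (-(w k / Real.sqrt (SY k k))))))
      (Real.sqrt (1 - α))) :
    1 - α ≤ Filter.liminf
      (fun nm : ℕ × ℕ =>
        ((PX.prod PY) {ω : ΩX × ΩY |
          (Set.Ioc
              (FXhat nm.1 ω.1 j + zq (1 - αt) * Real.sqrt (SXhat nm.1 ω.1 j j / nm.1))
              (FYhat nm.2 ω.2 j - zq (1 - βt) * Real.sqrt (SYhat nm.2 ω.2 j j / nm.2)) ×ˢ
            Set.Ioc
              (FYhat nm.2 ω.2 k + zq (1 - βt) * Real.sqrt (SYhat nm.2 ω.2 k k / nm.2))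
              (FXhat nm.1 ω.1 k - zq (1 - αt) * Real.sqrt (SXhat nm.1 ω.1 k k / nm.1))) ⊆
          Set.Ioc (FX j) (FY j) ×ˢ Set.Ioc (FY k) (FX k)}).toReal)
      Filter.atTop := by
  obtain ⟨hα0, hα1⟩ := hα
  set c : ℝ := Real.sqrt (1 - α) with hc
  have hc0 : 0 < c := Real.sqrt_pos.mpr (by linarith)
  have hc2 : c ^ 2 = 1 - α := Real.sq_sqrt (by linarith)
  set zα := zq (1 - αt) with hzα
  set zβ := zq (1 - βt) with hzβ
  set AX : ℕ → Set ΩX := fun n =>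
    {ωx | FX j ≤ FXhat n ωx j + zα * Real.sqrt (SXhat n ωx j j / n) ∧
      FXhat n ωx k - zα * Real.sqrt (SXhat n ωx k k / n) ≤ FX k} with hAX
  set AY : ℕ → Set ΩY := fun m =>
    {ωy | FY k ≤ FYhat m ωy k + zβ * Real.sqrt (SYhat m ωy k k / m) ∧
      FYhat m ωy j - zβ * Real.sqrt (SYhat m ωy j j / m) ≤ FY j} with hAY
  set aX : ℕ → ℝ := fun n => (PX (AX n)).toReal with haX
  set aY : ℕ → ℝ := fun m => (PY (AY m)).toReal with haY
  -- liminf bounds on X and Y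
  have hXlim : c ≤ liminf aX atTop := by
    refine le_trans (quant_main νX SX j k (hSXdiag j) (hSXdiag k) ⟨hα0, hα1⟩ hαt) ?_
    exact keyLim PX FXhat hFXhatMeas FX SX j k (hSXdiag j) (hSXdiag k) νX hνX hXconv
      SXhat (hSXhat j j) (hSXhat k k) zα
  have hYlim : c ≤ liminf aY atTop := by
    have hβt' : 1 - βt = quantileOf
        (νY.map (fun w => stdNormalCDF
          (max (-(w k / Real.sqrt (SY k k))) (w j / Real.sqrt (SY j j)))))
        (Real.sqrt (1 - α)) := by
      rw [hβt]
      congr 2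
      funext w
      rw [max_comm]
    refine le_trans (quant_main νY SY k j (hSYdiag k) (hSYdiag j) ⟨hα0, hα1⟩ hβt') ?_
    exact keyLim PY FYhat hFYhatMeas FY SY k j (hSYdiag k) (hSYdiag j) νY hνY hYconv
      SYhat (hSYhat k k) (hSYhat j j) zβ
  -- pointwise product bound
  set e : ℕ × ℕ → ℝ := fun nm =>
    ((PX.prod PY) {ω : ΩX × ΩY |
      (Set.Ioc
          (FXhat nm.1 ω.1 j + zα * Real.sqrt (SXhat nm.1 ω.1 j j / nm.1))
          (FYhat nm.2 ω.2 j - zβ * Real.sqrt (SYhat nm.2 ω.2 j j / nm.2)) ×ˢ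
        Set.Ioc
          (FYhat nm.2 ω.2 k + zβ * Real.sqrt (SYhat nm.2 ω.2 k k / nm.2))
          (FXhat nm.1 ω.1 k - zα * Real.sqrt (SXhat nm.1 ω.1 k k / nm.1))) ⊆
      Set.Ioc (FX j) (FY j) ×ˢ Set.Ioc (FY k) (FX k)}).toReal with he
  have hprod : ∀ nm : ℕ × ℕ, aX nm.1 * aY nm.2 ≤ e nm := by
    rintro ⟨n, m⟩
    have hsub : AX n ×ˢ AY m ⊆ {ω : ΩX × ΩY |
        (Set.Ioc
            (FXhat n ω.1 j + zα * Real.sqrt (SXhat n ω.1 j j / n))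
            (FYhat m ω.2 j - zβ * Real.sqrt (SYhat m ω.2 j j / m)) ×ˢ
          Set.Ioc
            (FYhat m ω.2 k + zβ * Real.sqrt (SYhat m ω.2 k k / m))
            (FXhat n ω.1 k - zα * Real.sqrt (SXhat n ω.1 k k / n))) ⊆
        Set.Ioc (FX j) (FY j) ×ˢ Set.Ioc (FY k) (FX k)} := by
      rintro ⟨ωx, ωy⟩ ⟨hx, hy⟩
      exact Set.prod_mono (Set.Ioc_subset_Ioc hx.1 hy.2) (Set.Ioc_subset_Ioc hy.1 hx.2)
    have h1 : (PX.prod PY) (AX n ×ˢ AY m) = PX (AX n) * PY (AY m) :=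
      Measure.prod_prod _ _
    have h2 := measure_mono (μ := PX.prod PY) hsub
    rw [h1] at h2
    have h3 := ENNReal.toReal_mono (measure_ne_top _ _) h2
    rw [ENNReal.toReal_mul] at h3
    exact h3
  -- bounds for liminf machinery
  have haX0 : ∀ n, 0 ≤ aX n := fun _ => ENNReal.toReal_nonneg
  have haY0 : ∀ m, 0 ≤ aY m := fun _ => ENNReal.toReal_nonneg
  have he1 : ∀ nm, e nm ≤ 1 := fun nm =>
    ENNReal.toReal_le_of_le_ofReal one_pos.le (by simpa using prob_le_one)
  -- main δ step
  have hstep : ∀ δ : ℝ, 0 < δ → δ < c → (c - δ) ^ 2 ≤ liminf e atTop := by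
    intro δ hδ0 hδc
    have hbX : IsBoundedUnder (· ≥ ·) atTop aX :=
      isBoundedUnder_of ⟨0, fun n => haX0 n⟩
    have hbY : IsBoundedUnder (· ≥ ·) atTop aY :=
      isBoundedUnder_of ⟨0, fun m => haY0 m⟩
    have hevX : ∀ᶠ n in atTop, c - δ < aX n :=
      eventually_lt_of_lt_liminf (lt_of_lt_of_le (by linarith) hXlim) hbX
    have hevY : ∀ᶠ m in atTop, c - δ < aY m :=
      eventually_lt_of_lt_liminf (lt_of_lt_of_le (by linarith) hYlim) hbY
    refine le_liminf_of_le (isCoboundedUnder_ge_of_le _ (x := 1) he1) ?_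
    have hev : ∀ᶠ nm : ℕ × ℕ in atTop, (c - δ) ^ 2 ≤ e nm := by
      rw [← prod_atTop_atTop_eq]
      have h1 : ∀ᶠ nm : ℕ × ℕ in atTop ×ˢ atTop, c - δ < aX nm.1 := hevX.prod_inl atTop
      have h2 : ∀ᶠ nm : ℕ × ℕ in atTop ×ˢ atTop, c - δ < aY nm.2 := hevY.prod_inr atTop
      filter_upwards [h1, h2] with nm hx hy
      calc (c - δ) ^ 2 = (c - δ) * (c - δ) := sq (c - δ)
        _ ≤ aX nm.1 * aY nm.2 :=
            mul_le_mul hx.le hy.le (by linarith) (haX0 nm.1)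
        _ ≤ e nm := hprod nm
    exact hev
  -- take δ → 0
  have htendδ : Tendsto (fun δ : ℝ => (c - δ) ^ 2) (𝓝[>] 0) (𝓝 (c ^ 2)) := by
    have hco : Continuous (fun δ : ℝ => (c - δ) ^ 2) :=
      (continuous_const.sub continuous_id).pow 2
    have h := (hco.tendsto 0).mono_left (nhdsWithin_le_nhds (s := Set.Ioi (0:ℝ)))
    simpa using h
  have hev : ∀ᶠ δ in 𝓝[>] (0:ℝ), (c - δ) ^ 2 ≤ liminf e atTop := by
    filter_upwards [Ioo_mem_nhdsGT_of_mem (Set.left_mem_Ico.mpr hc0)] with δ hδ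
    exact hstep δ hδ.1 hδ.2
  have hfin := le_of_tendsto htendδ hev
  rw [hc2] at hfin
  exact hfin
end
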